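/- Let n ≥ 1 and f : (a,b) → ℝ be non-negative. Then the following are equivalent: (i) f is n-times monotone non-decreasing on (a,b); (ii) for every k = 1,...,n, every x ∈ (a,b) and all h₁,...,h_k > 0 with x + h₁ + ... + h_k ∈ (a,b), one has Δ_{h_k}...Δ_{h₁} f(x) ≥ 0; (iii) for every k = 1,...,n, every x ∈ (a,b) and every h > 0 with x + kh ∈ (a,b), one has (Δ_h)^k f(x) ≥ 0. -/

import Mathlib

open Set Filter

/-- `f` is `n`-times monotone non-decreasing on `s`. -/
def MultiMonoIncrOn (n : ℕ) (s : Set ℝ) (f : ℝ → ℝ) : Prop :=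
  ((∀ x ∈ s, 0 ≤ f x) ∧ MonotoneOn f s) ∧
  (2 ≤ n → ∃ F : ℕ → ℝ → ℝ, F 0 = f ∧
    (∀ k, k + 1 ≤ n - 2 → ∀ x ∈ s, HasDerivAt (F k) (F (k + 1) x) x) ∧
    ∀ k ≤ n - 2, (∀ x ∈ s, 0 ≤ F k x) ∧ MonotoneOn (F k) s ∧ ConvexOn ℝ s (F k))

/-- Iterated forward difference `Δ_{h_k} ⋯ Δ_{h_1} f` for the list of steps `l`. -/
def iterDiff (f : ℝ → ℝ) : List ℝ → ℝ → ℝ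
  | [] => f
  | h :: t => fun x => iterDiff f t (x + h) - iterDiff f t x

open scoped fwdDiff Topology

/-!
(i) ⇒ (ii) by induction on the number of steps: by the mean value theorem
`Δ_h Δ_{h₂} ⋯ f x = h * Δ_{h₂} ⋯ f' ξ`, and `f'` is `(n - 1)`-times monotone. At the bottom
only monotonicity of `f` (one step) or its convexity (two steps, when `n = 2`) is needed.
(ii) ⇒ (iii) is a special case.

(iii) ⇒ (i) by induction on `n`. Nonnegative first and second differences make `f` monotone
and convex (convex at grid points first, then everywhere by monotonicity). The third difference
`f (x + 2h) - 3 f (x + h) + 3 f x - f (x - h) ≥ 0` forces the one-sided derivatives of the convex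
`f` to agree, so `f` is differentiable. Since `Δ_{m δ}` is a sum of `m` shifted copies of `Δ_δ`,
`Δ_{h / m} (Δ_h)^k f x ≥ 0` for `k < n`; dividing by `h / m` and letting `m → ∞` shows that `f'`
has nonnegative equal-step differences up to order `n - 1`.
-/

section

section FwdDiff

variable {M G : Type*} [AddCommMonoid M] [AddCommGroup G]

lemma fwdDiff_commute (h h' : M) :
    Function.Commute (fwdDiff h : (M → G) → M → G) (fwdDiff h') := by
  intro g
  funext x
  simp only [fwdDiff, add_right_comm x h h']
  abel

lemma fwdDiff_nsmul_eq_sum (h : M) (m : ℕ) (g : M → G) (x : M) :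
    Δ_[m • h] g x = ∑ j ∈ Finset.range m, Δ_[h] g (x + j • h) := by
  simp only [fwdDiff, add_assoc, ← succ_nsmul]
  rw [Finset.sum_range_sub (fun j => g (x + j • h))]
  simp

end FwdDiff

lemma mul_sum_range_le_of_monotoneOn {d : ℕ → ℝ} {N j : ℕ} (hd : MonotoneOn d (Iio N))
    (hj : j ≤ N) : N * ∑ i ∈ Finset.range j, d i ≤ j * ∑ i ∈ Finset.range N, d i := by
  rcases hj.eq_or_lt with rfl | hj
  · rfl
  have hlow : ∑ i ∈ Finset.range j, d i ≤ j * d j := by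
    simpa using Finset.sum_le_card_nsmul _ _ (d j) fun i hi =>
      hd (mem_Iio.2 ((Finset.mem_range.1 hi).trans hj)) (mem_Iio.2 hj)
        (Finset.mem_range.1 hi).le
  have hup : ((N : ℝ) - j) * d j ≤ ∑ i ∈ Finset.Ico j N, d i := by
    simpa [Nat.cast_sub hj.le] using Finset.card_nsmul_le_sum _ _ (d j) fun i hi =>
      hd (mem_Iio.2 hj) (mem_Iio.2 (Finset.mem_Ico.1 hi).2) (Finset.mem_Ico.1 hi).1
  have hNj : (0 : ℝ) ≤ N - j := by
    rw [sub_nonneg]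
    exact_mod_cast hj.le
  rw [← Finset.sum_range_add_sum_Ico _ hj.le]
  nlinarith [mul_le_mul_of_nonneg_left hlow hNj, (j.cast_nonneg : (0 : ℝ) ≤ j)]

lemma fwdDiff_iterate_two (f : ℝ → ℝ) (h y : ℝ) :
    (Δ_[h])^[2] f y = f (y + 2 * h) - 2 * f (y + h) + f y := by
  simp only [Function.iterate_succ_apply', Function.iterate_zero_apply, fwdDiff]
  ring_nf

lemma fwdDiff_iterate_three (f : ℝ → ℝ) (h y : ℝ) :
    (Δ_[h])^[3] f y = f (y + 3 * h) - 3 * f (y + 2 * h) + 3 * f (y + h) - f y := by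
  simp only [Function.iterate_succ_apply', Function.iterate_zero_apply, fwdDiff]
  ring_nf

lemma iterDiff_replicate (f : ℝ → ℝ) (k : ℕ) (h : ℝ) :
    iterDiff f (List.replicate k h) = (Δ_[h])^[k] f := by
  induction k with
  | zero => rfl
  | succ k ih => rw [Function.iterate_succ_apply', ← ih]; rfl

variable {a b : ℝ} {f f' : ℝ → ℝ} {n : ℕ}

lemma hasDerivAt_iterDiff (hd : ∀ y ∈ Ioo a b, HasDerivAt f (f' y) y)
    {l : List ℝ} (hl : ∀ h ∈ l, 0 ≤ h) {x : ℝ} (hx : x ∈ Ioo a b) (hxl : x + l.sum ∈ Ioo a b) :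
    HasDerivAt (iterDiff f l) (iterDiff f' l x) x := by
  induction l generalizing x with
  | nil => exact hd x hx
  | cons h t ih =>
    rw [List.forall_mem_cons] at hl
    rw [List.sum_cons, ← add_assoc] at hxl
    have ht := List.sum_nonneg hl.2
    have hxh : x + h ∈ Ioo a b := ordConnected_Ioo.out hx hxl ⟨by linarith [hl.1], by linarith⟩
    have hxt : x + t.sum ∈ Ioo a b :=
      ordConnected_Ioo.out hx hxl ⟨by linarith, by linarith [hl.1]⟩
    exact ((ih hl.2 hxh hxl).comp_add_const x h).sub (ih hl.2 hx hxt)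

lemma exists_iterDiff_cons_eq_mul (hd : ∀ y ∈ Ioo a b, HasDerivAt f (f' y) y)
    {h : ℝ} (hh : 0 < h) {t : List ℝ} (ht : ∀ h ∈ t, 0 ≤ h) {x : ℝ} (hx : x ∈ Ioo a b)
    (hxs : x + h + t.sum ∈ Ioo a b) :
    ∃ ξ ∈ Ioo x (x + h), iterDiff f (h :: t) x = h * iterDiff f' t ξ := by
  have hsum := List.sum_nonneg ht
  have hderiv : ∀ y ∈ Icc x (x + h), HasDerivAt (iterDiff f t) (iterDiff f' t y) y :=
    fun y hy => hasDerivAt_iterDiff hd ht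
      (ordConnected_Ioo.out hx hxs ⟨hy.1, by linarith [hy.2]⟩)
      (ordConnected_Ioo.out hx hxs ⟨by linarith [hy.1], by linarith [hy.2]⟩)
  obtain ⟨ξ, hξ, hslope⟩ := exists_hasDerivAt_eq_slope (iterDiff f t) (iterDiff f' t)
    (by linarith : x < x + h) (fun y hy => (hderiv y hy).continuousAt.continuousWithinAt)
    (fun y hy => hderiv y (Ioo_subset_Icc_self hy))
  refine ⟨ξ, hξ, ?_⟩
  rw [hslope, add_sub_cancel_left, mul_div_cancel₀ _ hh.ne']
  rfl

lemma ConvexOn.fwdDiff_le_fwdDiff {s : Set ℝ} (hf : ConvexOn ℝ s f) {h x y : ℝ} (hh : 0 < h)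
    (hx : x ∈ s) (hy : y + h ∈ s) (hxy : x ≤ y) : Δ_[h] f x ≤ Δ_[h] f y := by
  have hxh : x + h ∈ s := hf.1.ordConnected.out hx hy ⟨by linarith, by linarith⟩
  have hy' : y ∈ s := hf.1.ordConnected.out hx hy ⟨hxy, by linarith⟩
  have key : slope f x (x + h) ≤ slope f y (y + h) := calc
    slope f x (x + h) ≤ slope f x (y + h) :=
      hf.slope_mono hx ⟨hxh, (by linarith : x < x + h).ne'⟩ ⟨hy, (by linarith : x < y + h).ne'⟩
        (by linarith)
    _ = slope f (y + h) x := slope_comm _ _ _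
    _ ≤ slope f (y + h) y :=
      hf.slope_mono hy ⟨hx, (by linarith : x < y + h).ne⟩ ⟨hy', (by linarith : y < y + h).ne⟩ hxy
    _ = slope f y (y + h) := slope_comm _ _ _
  simp only [slope_def_field, add_sub_cancel_left] at key
  exact (div_le_div_iff_of_pos_right hh).1 key

section MultiMono

variable {s : Set ℝ}

lemma multiMonoIncrOn_one_iff :
    MultiMonoIncrOn 1 s f ↔ (∀ x ∈ s, 0 ≤ f x) ∧ MonotoneOn f s := by
  simp [MultiMonoIncrOn]

lemma multiMonoIncrOn_two_iff :
    MultiMonoIncrOn 2 s f ↔ (∀ x ∈ s, 0 ≤ f x) ∧ MonotoneOn f s ∧ ConvexOn ℝ s f := by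
  constructor
  · rintro ⟨-, hF⟩
    obtain ⟨F, rfl, -, hprop⟩ := hF le_rfl
    exact hprop 0 le_rfl
  · rintro ⟨h0, hm, hc⟩
    exact ⟨⟨h0, hm⟩, fun _ => ⟨fun _ => f, rfl, fun k hk => by omega, fun _ _ => ⟨h0, hm, hc⟩⟩⟩

lemma multiMonoIncrOn_succ_iff (hn : 2 ≤ n) :
    MultiMonoIncrOn (n + 1) s f ↔ (∀ x ∈ s, 0 ≤ f x) ∧ MonotoneOn f s ∧ ConvexOn ℝ s f ∧
      ∃ f' : ℝ → ℝ, (∀ x ∈ s, HasDerivAt f (f' x) x) ∧ MultiMonoIncrOn n s f' := by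
  constructor
  · rintro ⟨-, hF⟩
    obtain ⟨F, rfl, hder, hprop⟩ := hF (by omega)
    refine ⟨(hprop 0 (by omega)).1, (hprop 0 (by omega)).2.1, (hprop 0 (by omega)).2.2, F 1,
      hder 0 (by omega), ⟨(hprop 1 (by omega)).1, (hprop 1 (by omega)).2.1⟩, fun _ => ?_⟩
    exact ⟨fun k => F (k + 1), rfl, fun k hk => hder (k + 1) (by omega),
      fun k hk => hprop (k + 1) (by omega)⟩
  · rintro ⟨h0, hm, hc, f', hd, -, hF'⟩
    obtain ⟨F', rfl, hder', hprop'⟩ := hF' hn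
    refine ⟨⟨h0, hm⟩, fun _ => ⟨fun k => k.casesOn f fun j => F' j, rfl, ?_, ?_⟩⟩
    · rintro (_ | k) hk
      · exact hd
      · exact hder' k (by omega)
    · rintro (_ | k) hk
      · exact ⟨h0, hm, hc⟩
      · exact hprop' k (by omega)

end MultiMono

theorem MultiMonoIncrOn.iterDiff_nonneg {l : List ℝ} (hf : MultiMonoIncrOn n (Ioo a b) f)
    (hl : l ≠ []) (hln : l.length ≤ n) (hpos : ∀ h ∈ l, 0 < h) {x : ℝ} (hx : x ∈ Ioo a b)
    (hxl : x + l.sum ∈ Ioo a b) : 0 ≤ iterDiff f l x := by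
  induction l generalizing n f x with
  | nil => exact absurd rfl hl
  | cons h t ih =>
    rw [List.forall_mem_cons] at hpos
    rw [List.sum_cons, ← add_assoc] at hxl
    have ht := List.sum_nonneg fun y hy => (hpos.2 y hy).le
    rcases t with _ | ⟨h', t⟩
    · simpa [iterDiff] using hf.1.2 hx hxl (by linarith [hpos.1])
    obtain rfl | hn : n = 2 ∨ 3 ≤ n := by simp at hln; omega
    · obtain rfl : t = [] := by simpa using hln
      simp only [List.sum_cons, List.sum_nil, add_zero] at hxl
      have hconv := (multiMonoIncrOn_two_iff.1 hf).2.2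
      exact sub_nonneg.2
        (hconv.fwdDiff_le_fwdDiff (hpos.2 h' (by simp)) hx hxl (by linarith [hpos.1]))
    · obtain ⟨m, rfl⟩ : ∃ m, n = m + 1 := ⟨n - 1, by omega⟩
      obtain ⟨-, -, -, f', hd, hf'⟩ := (multiMonoIncrOn_succ_iff (by omega)).1 hf
      obtain ⟨ξ, hξ, heq⟩ := exists_iterDiff_cons_eq_mul hd hpos.1
        (fun y hy => (hpos.2 y hy).le) hx hxl
      rw [heq]
      refine mul_nonneg hpos.1.le (ih hf' (by simp) (by simp at hln ⊢; omega) hpos.2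
        (ordConnected_Ioo.out hx hxl ⟨hξ.1.le, by linarith [hξ.2]⟩)
        (ordConnected_Ioo.out hx hxl ⟨by linarith [hξ.1], by linarith [hξ.2]⟩))

/-- Condition (iii), with `(Δ_[h])^[k] f` for `iterDiff f (List.replicate k h)`. -/
def FwdDiffIterNonnegOn (n : ℕ) (a b : ℝ) (f : ℝ → ℝ) : Prop :=
  ∀ k, 1 ≤ k → k ≤ n → ∀ h : ℝ, 0 < h → ∀ x ∈ Ioo a b, x + k * h ∈ Ioo a b →
    0 ≤ (Δ_[h])^[k] f x

namespace FwdDiffIterNonnegOn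

lemma monotoneOn (hP : FwdDiffIterNonnegOn n a b f) (hn : 1 ≤ n) : MonotoneOn f (Ioo a b) := by
  intro x hx y hy hxy
  rcases hxy.eq_or_lt with rfl | hlt
  · rfl
  simpa [fwdDiff] using hP 1 le_rfl hn (y - x) (by linarith) x hx (by simpa using hy)

lemma fwdDiff_iterate_nsmul_nonneg (hP : FwdDiffIterNonnegOn n a b f) {δ : ℝ} (hδ : 0 < δ)
    (m k p : ℕ) (hp : 1 ≤ p) (hpk : p + k ≤ n) {x : ℝ} (hx : x ∈ Ioo a b)
    (hxs : x + (p + k * m) * δ ∈ Ioo a b) : 0 ≤ (Δ_[m • δ])^[k] ((Δ_[δ])^[p] f) x := by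
  induction k generalizing p x with
  | zero => simpa using hP p hp (by omega) δ hδ x hx (by simpa using hxs)
  | succ k ih =>
    -- `Δ_[m • δ]` is a sum of shifted `Δ_[δ]`, and `Δ_[δ]` raises `p` by one
    rw [Function.iterate_succ_apply', fwdDiff_nsmul_eq_sum]
    refine Finset.sum_nonneg fun j hj => ?_
    have hjm : ((j : ℝ) + 1) * δ ≤ m * δ := by
      gcongr
      exact_mod_cast Finset.mem_range.1 hj
    have hj0 : (0 : ℝ) ≤ j * δ := by positivity
    have hkm : (0 : ℝ) ≤ k * m * δ := by positivity
    have hpδ : (0 : ℝ) ≤ p * δ := by positivity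
    push_cast at hxs
    rw [((fwdDiff_commute δ (m • δ)).iterate_right k) _, ← Function.iterate_succ_apply' (Δ_[δ])]
    refine ih (p + 1) (by omega) (by omega) (ordConnected_Ioo.out hx hxs ⟨?_, ?_⟩)
      (ordConnected_Ioo.out hx hxs ⟨?_, ?_⟩) <;> rw [nsmul_eq_mul] <;> push_cast <;> linarith

lemma fwdDiff_iterate_deriv_nonneg (hP : FwdDiffIterNonnegOn (n + 1) a b f)
    (hd : ∀ y ∈ Ioo a b, HasDerivAt f (f' y) y) {k : ℕ} (hk : k ≤ n) {h : ℝ} (hh : 0 < h)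
    {x : ℝ} (hx : x ∈ Ioo a b) (hxs : x + k * h ∈ Ioo a b) : 0 ≤ (Δ_[h])^[k] f' x := by
  have hG : HasDerivAt ((Δ_[h])^[k] f) ((Δ_[h])^[k] f' x) x := by
    simpa only [iterDiff_replicate] using hasDerivAt_iterDiff hd (l := List.replicate k h)
      (by simp [hh.le]) hx (by simpa using hxs)
  have hstep : Tendsto (fun m : ℕ => h / m) atTop (𝓝[>] 0) :=
    tendsto_nhdsWithin_iff.2 ⟨tendsto_const_div_atTop_nhds_zero_nat h,
      (eventually_gt_atTop 0).mono fun m hm => by simp only [mem_Ioi]; positivity⟩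
  refine ge_of_tendsto (hG.tendsto_slope_zero_right.comp hstep) ?_
  have hsmall : ∀ᶠ m : ℕ in atTop, h / m < b - (x + k * h) :=
    (tendsto_order.1 (tendsto_const_div_atTop_nhds_zero_nat h)).2 _ (by linarith [hxs.2])
  filter_upwards [hsmall, eventually_gt_atTop 0] with m hm hm0
  have hkh : (0 : ℝ) ≤ k * h := by positivity
  have hend : x + ((1 : ℕ) + k * m) * (h / m) ∈ Ioo a b := by
    have hm' : (m : ℝ) ≠ 0 := by positivity
    have e : ((1 : ℕ) + k * m : ℝ) * (h / m) = h / m + k * h := by field_simp; ring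
    rw [e]
    constructor <;> linarith [hx.1, div_pos hh (Nat.cast_pos.2 hm0)]
  -- `Δ_[h / m] ((Δ_[h])^[k] f) x ≥ 0` because `h = m • (h / m)`
  have key := hP.fwdDiff_iterate_nsmul_nonneg (δ := h / m) (by positivity) m k 1 le_rfl
    (by omega) hx hend
  rw [nsmul_eq_mul, mul_div_cancel₀ _ (by positivity), Function.iterate_one,
    ← ((fwdDiff_commute _ _).iterate_right k) _] at key
  exact smul_nonneg (by positivity) key

lemma mul_sub_le_mul_sub (hP : FwdDiffIterNonnegOn n a b f) (hn : 2 ≤ n) {δ x : ℝ}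
    (hδ : 0 < δ) {N j : ℕ} (hj : j ≤ N) (hx : x ∈ Ioo a b) (hxN : x + N * δ ∈ Ioo a b) :
    N * (f (x + j * δ) - f x) ≤ j * (f (x + N * δ) - f x) := by
  have htelescope : ∀ i : ℕ, f (x + i * δ) - f x = ∑ l ∈ Finset.range i, Δ_[δ] f (x + l * δ) := by
    intro i
    simpa [fwdDiff, nsmul_eq_mul] using fwdDiff_nsmul_eq_sum δ i f x
  rw [htelescope, htelescope]
  refine mul_sum_range_le_of_monotoneOn (monotoneOn_of_le_succ ordConnected_Iio ?_) hj
  intro i _ _ hi1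
  simp only [Order.succ_eq_add_one, mem_Iio] at hi1
  have hi : ((i : ℝ) + 2) * δ ≤ N * δ := by
    gcongr
    exact_mod_cast hi1
  have hiδ : (0 : ℝ) ≤ i * δ := by positivity
  have := hP 2 (by norm_num) hn δ hδ (x + i * δ) (ordConnected_Ioo.out hx hxN ⟨?_, ?_⟩)
    (ordConnected_Ioo.out hx hxN ⟨?_, ?_⟩)
  · rw [fwdDiff_iterate_two] at this
    simp only [fwdDiff, Order.succ_eq_add_one]
    push_cast
    ring_nf at this ⊢
    linarith
  all_goals push_cast; linarith

lemma apply_convexComb_le (hP : FwdDiffIterNonnegOn n a b f) (hn : 2 ≤ n) {x y t : ℝ}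
    (hx : x ∈ Ioo a b) (hy : y ∈ Ioo a b) (hxy : x < y) (ht0 : 0 < t) (ht1 : t < 1) (N : ℕ) :
    f ((1 - t) * x + t * y) ≤ (1 - t) * f x + t * f y + (f y - f x) / (N + 1) := by
  have hmono := hP.monotoneOn (by omega)
  have hfxy : f x ≤ f y := hmono hx hy hxy.le
  have hM : (0 : ℝ) < N + 1 := by positivity
  -- compare with the grid point `x + j * δ` just to the right of `(1 - t) * x + t * y`
  set δ := (y - x) / (N + 1)
  have hδ0 : 0 < δ := div_pos (by linarith) hM
  have hδN : δ * (N + 1) = y - x := div_mul_cancel₀ _ hM.ne'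
  set j := ⌈t * (N + 1)⌉₊
  have hj : j ≤ N + 1 := Nat.ceil_le.2 (by push_cast; nlinarith)
  have hjt : t * (N + 1) * δ ≤ j * δ := mul_le_mul_of_nonneg_right (Nat.le_ceil _) hδ0.le
  have hjt' : (j : ℝ) < t * (N + 1) + 1 := Nat.ceil_lt_add_one (by positivity)
  have hjN : (j : ℝ) * δ ≤ (N + 1) * δ :=
    mul_le_mul_of_nonneg_right (by exact_mod_cast hj) hδ0.le
  have hy' : x + ((N + 1 : ℕ) : ℝ) * δ = y := by push_cast; linarith
  have hw : x + j * δ ∈ Ioo a b :=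
    ordConnected_Ioo.out hx hy ⟨le_add_of_nonneg_right (by positivity), by linarith⟩
  have hzw : f ((1 - t) * x + t * y) ≤ f (x + j * δ) :=
    hmono (by simpa only [smul_eq_mul] using
      convex_Ioo a b hx hy (by linarith) ht0.le (by ring)) hw (by nlinarith)
  have hB := hP.mul_sub_le_mul_sub hn hδ0 hj hx (by rwa [hy'])
  rw [hy'] at hB
  push_cast at hB
  have hjB := mul_le_mul_of_nonneg_right hjt'.le (sub_nonneg.2 hfxy)
  have hD : (f y - f x) / (N + 1) * (N + 1) = f y - f x := div_mul_cancel₀ _ hM.ne'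
  nlinarith

lemma convexOn (hP : FwdDiffIterNonnegOn n a b f) (hn : 2 ≤ n) : ConvexOn ℝ (Ioo a b) f := by
  refine LinearOrder.convexOn_of_lt (convex_Ioo a b) fun x hx y hy hxy s t hs ht hst => ?_
  obtain rfl : s = 1 - t := by linarith
  have hlim : Tendsto (fun N : ℕ => (1 - t) * f x + t * f y + (f y - f x) / (N + 1))
      atTop (𝓝 ((1 - t) * f x + t * f y)) := by
    simpa [div_eq_mul_inv] using tendsto_const_nhds.add
      (tendsto_one_div_add_atTop_nhds_zero_nat.const_mul (f y - f x))
  exact ge_of_tendsto' hlim (hP.apply_convexComb_le hn hx hy hxy ht (by linarith))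

end FwdDiffIterNonnegOn

namespace ConvexOn

lemma two_mul_rightDeriv_sub_leftDeriv_le_slope (hf : ConvexOn ℝ (Ioo a b) f)
    (h3 : ∀ h : ℝ, 0 < h → ∀ y ∈ Ioo a b, y + 3 * h ∈ Ioo a b → 0 ≤ (Δ_[h])^[3] f y)
    {x c : ℝ} (hx : x ∈ Ioo a b) (hc : c ∈ Ioo x b) :
    2 * derivWithin f (Ioi x) x - derivWithin f (Iio x) x ≤ slope f x c := by
  have hx' : x ∈ interior (Ioo a b) := by rwa [interior_Ioo]
  have hcS : c ∈ Ioo a b := ⟨hx.1.trans hc.1, hc.2⟩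
  set ε := min (x - a) ((c - x) / 2)
  have hε : 0 < ε := lt_min (by linarith [hx.1]) (by linarith [hc.1])
  have hbound : ∀ y ∈ Ioo x (x + ε),
      2 * derivWithin f (Ioi x) x - derivWithin f (Iio x) x ≤ slope f y c := by
    intro y hy
    have hya : y - x < x - a := lt_of_lt_of_le (by linarith [hy.2]) (min_le_left _ _)
    have hyc : 2 * (y - x) < c - x := by linarith [hy.2, min_le_right (x - a) ((c - x) / 2)]
    have hyS : y ∈ Ioo a b := ⟨hx.1.trans hy.1, by linarith [hc.2, hy.1]⟩
    have hxh : 2 * x - y ∈ Ioo a b := ⟨by linarith, by linarith [hx.2, hy.1]⟩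
    have hyh : 2 * y - x ∈ Ioo a b := ⟨by linarith [hy.1, hx.1], by linarith [hc.2]⟩
    have hR := hf.rightDeriv_le_slope_of_mem_interior hx' hyS hy.1
    have hL := hf.slope_le_leftDeriv_of_mem_interior hxh hx' (by linarith [hy.1])
    have hmid : slope f y (2 * y - x) ≤ slope f y c :=
      hf.slope_mono hyS ⟨hyh, (by linarith [hy.1] : y < 2 * y - x).ne'⟩
        ⟨hcS, (by linarith [hy.1] : y < c).ne'⟩ (by linarith [hy.1])
    have hthird := h3 (y - x) (by linarith [hy.1]) (2 * x - y) hxh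
      (by rwa [show 2 * x - y + 3 * (y - x) = 2 * y - x by ring])
    rw [fwdDiff_iterate_three, show 2 * x - y + 3 * (y - x) = 2 * y - x by ring,
      show 2 * x - y + 2 * (y - x) = y by ring, show 2 * x - y + (y - x) = x by ring] at hthird
    rw [slope_def_field] at hR hL hmid
    rw [show x - (2 * x - y) = y - x by ring, div_le_iff₀ (by linarith [hy.1])] at hL
    rw [le_div_iff₀ (by linarith [hy.1])] at hR
    rw [show 2 * y - x - y = y - x by ring] at hmid
    refine le_trans ?_ hmid
    rw [le_div_iff₀ (by linarith [hy.1])]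
    linarith
  have hcont : ContinuousAt (fun y => slope f y c) x := by
    simp only [slope_def_field]
    exact (continuousAt_const.sub ((hf.continuousOn isOpen_Ioo).continuousAt
      (isOpen_Ioo.mem_nhds hx))).div (continuousAt_const.sub continuousAt_id)
      (sub_ne_zero.2 hc.1.ne')
  exact ge_of_tendsto (hcont.tendsto.mono_left nhdsWithin_le_nhds)
    (eventually_of_mem (Ioo_mem_nhdsGT (by linarith)) hbound)

lemma rightDeriv_le_leftDeriv_of_fwdDiff_iterate_three_nonneg (hf : ConvexOn ℝ (Ioo a b) f)
    (h3 : ∀ h : ℝ, 0 < h → ∀ y ∈ Ioo a b, y + 3 * h ∈ Ioo a b → 0 ≤ (Δ_[h])^[3] f y)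
    {x : ℝ} (hx : x ∈ Ioo a b) :
    derivWithin f (Ioi x) x ≤ derivWithin f (Iio x) x := by
  have hx' : x ∈ interior (Ioo a b) := by rwa [interior_Ioo]
  have hR := (hasDerivWithinAt_iff_tendsto_slope' self_notMem_Ioi).1
    (hf.hasDerivWithinAt_rightDeriv_of_mem_interior hx')
  have := ge_of_tendsto hR (eventually_of_mem (Ioo_mem_nhdsGT hx.2)
    fun c hc => hf.two_mul_rightDeriv_sub_leftDeriv_le_slope h3 hx hc)
  linarith

lemma differentiableAt_of_fwdDiff_iterate_three_nonneg (hf : ConvexOn ℝ (Ioo a b) f)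
    (h3 : ∀ h : ℝ, 0 < h → ∀ y ∈ Ioo a b, y + 3 * h ∈ Ioo a b → 0 ≤ (Δ_[h])^[3] f y)
    {x : ℝ} (hx : x ∈ Ioo a b) :
    DifferentiableAt ℝ f x := by
  have hx' : x ∈ interior (Ioo a b) := by rwa [interior_Ioo]
  have heq := le_antisymm (hf.rightDeriv_le_leftDeriv_of_fwdDiff_iterate_three_nonneg h3 hx)
    (hf.leftDeriv_le_rightDeriv_of_mem_interior hx')
  refine (hasDerivAt_iff_tendsto_slope_left_right (f' := derivWithin f (Ioi x) x).2
    ⟨?_, ?_⟩).differentiableAt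
  · rw [heq]
    exact (hasDerivWithinAt_iff_tendsto_slope' self_notMem_Iio).1
      (hf.hasDerivWithinAt_leftDeriv_of_mem_interior hx')
  · exact (hasDerivWithinAt_iff_tendsto_slope' self_notMem_Ioi).1
      (hf.hasDerivWithinAt_rightDeriv_of_mem_interior hx')

end ConvexOn

theorem FwdDiffIterNonnegOn.multiMonoIncrOn (hP : FwdDiffIterNonnegOn n a b f) (hn : 1 ≤ n)
    (hf : ∀ x ∈ Ioo a b, 0 ≤ f x) : MultiMonoIncrOn n (Ioo a b) f := by
  induction n, hn using Nat.le_induction generalizing f with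
  | base => exact multiMonoIncrOn_one_iff.2 ⟨hf, hP.monotoneOn le_rfl⟩
  | succ n hn ih =>
    have hmono := hP.monotoneOn (by omega)
    have hconv := hP.convexOn (by omega)
    rcases hn.eq_or_lt with rfl | hn
    · exact multiMonoIncrOn_two_iff.2 ⟨hf, hmono, hconv⟩
    have hd : ∀ x ∈ Ioo a b, HasDerivAt f (deriv f x) x := fun x hx =>
      (hconv.differentiableAt_of_fwdDiff_iterate_three_nonneg
        (fun h hh y hy hy3 => hP 3 (by norm_num) (by omega) h hh y hy (by exact_mod_cast hy3))
        hx).hasDerivAt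
    refine (multiMonoIncrOn_succ_iff (by omega)).2 ⟨hf, hmono, hconv, deriv f, hd, ih ?_ ?_⟩
    · exact fun k _ hk h hh x hx hxs => hP.fwdDiff_iterate_deriv_nonneg hd hk hh hx hxs
    · exact fun x hx => hP.fwdDiff_iterate_deriv_nonneg hd (k := 0) n.zero_le one_pos hx
        (by simpa using hx)

end

theorem multimono_iff_differences_general (n : ℕ) (hn : 1 ≤ n) (a b : ℝ)
    (f : ℝ → ℝ) (hf : ∀ x ∈ Set.Ioo a b, 0 ≤ f x) :
    (MultiMonoIncrOn n (Set.Ioo a b) f ↔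
      (∀ k, 1 ≤ k → k ≤ n → ∀ l : List ℝ, l.length = k → (∀ h ∈ l, 0 < h) →
        ∀ x ∈ Set.Ioo a b, x + l.sum ∈ Set.Ioo a b → 0 ≤ iterDiff f l x)) ∧
    (MultiMonoIncrOn n (Set.Ioo a b) f ↔
      (∀ k, 1 ≤ k → k ≤ n → ∀ h : ℝ, 0 < h →
        ∀ x ∈ Set.Ioo a b, x + k * h ∈ Set.Ioo a b →
          0 ≤ iterDiff f (List.replicate k h) x)) := by
  have replicate_pos (k : ℕ) {h : ℝ} (hh : 0 < h) : ∀ y ∈ List.replicate k h, 0 < y :=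
    fun _ hy => List.eq_of_mem_replicate hy ▸ hh
  refine ⟨⟨fun hM k hk hkn l hl hpos x hx hxl => ?_, fun h2 => ?_⟩,
    ⟨fun hM k hk hkn h hh x hx hxs => ?_, fun h3 => ?_⟩⟩
  · exact hM.iterDiff_nonneg (List.ne_nil_of_length_pos (by omega)) (by omega) hpos hx hxl
  · refine FwdDiffIterNonnegOn.multiMonoIncrOn (fun k hk hkn h hh x hx hxs => ?_) hn hf
    rw [← iterDiff_replicate]
    exact h2 k hk hkn _ List.length_replicate (replicate_pos k hh) x hx (by simpa using hxs)
  · exact hM.iterDiff_nonneg (by simp; omega) (by simpa) (replicate_pos k hh) hx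
      (by simpa using hxs)
  · exact FwdDiffIterNonnegOn.multiMonoIncrOn
      (by simpa only [FwdDiffIterNonnegOn, iterDiff_replicate] using h3) hn hf

/-- Characterization of `n`-times monotone non-decreasing functions via iterated
difference operators (McNeil–Nešlehová). -/
theorem multimono_iff_differences (n : ℕ) (hn : 1 ≤ n) (a b : ℝ) (hab : a < b)
    (f : ℝ → ℝ) (hf : ∀ x ∈ Set.Ioo a b, 0 ≤ f x) :
    (MultiMonoIncrOn n (Set.Ioo a b) f ↔
      (∀ k, 1 ≤ k → k ≤ n → ∀ l : List ℝ, l.length = k → (∀ h ∈ l, 0 < h) →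
        ∀ x ∈ Set.Ioo a b, x + l.sum ∈ Set.Ioo a b → 0 ≤ iterDiff f l x)) ∧
    (MultiMonoIncrOn n (Set.Ioo a b) f ↔
      (∀ k, 1 ≤ k → k ≤ n → ∀ h : ℝ, 0 < h →
        ∀ x ∈ Set.Ioo a b, x + k * h ∈ Set.Ioo a b →
          0 ≤ iterDiff f (List.replicate k h) x)) :=
  multimono_iff_differences_general n hn a b f hf
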